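/- For every μ ≥ 1, ∫_{q ∈ (0,∞)^μ} (∑_{i ≠ j} Real.sqrt (q i * q j)) · (∏_{i < j} (q i − q j)²) · exp (−∑ m, q m) dq = Q̄_μ · ∑_{k=0}^{μ−1} ∑_{l=0}^{μ−1} ( I_{k k}^{(1/2)} · I_{l l}^{(1/2)} − (I_{k l}^{(1/2)})² ), where the outer sum on the left is over all ordered pairs (i, j) of distinct indices in Fin μ. -/

import Mathlib

open scoped BigOperators

/-- The Laguerre polynomial `L_n`. -/
noncomputable def laguerre (n : ℕ) (x : ℝ) : ℝ :=
  ∑ k ∈ Finset.range (n + 1), (-1) ^ k * (n.choose k : ℝ) * x ^ k / (k.factorial : ℝ)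

/-- `I_{kl}^{(β)} = ∫₀^∞ e^{-q} q^β L_k(q) L_l(q) dq`. -/
noncomputable def Ikl (k l : ℕ) (β : ℝ) : ℝ :=
  ∫ q in Set.Ioi (0 : ℝ), Real.exp (-q) * q ^ β * laguerre k q * laguerre l q

/-- `Q̄_μ = μ! ∏_{k=0}^{μ-1} (k!)²`. -/
noncomputable def Qbar (μ : ℕ) : ℝ :=
  (μ.factorial : ℝ) * ∏ k ∈ Finset.range μ, ((k.factorial : ℝ)) ^ 2


/-!
Since the rescaled Laguerre polynomials `(-1)^k k! L_k` are monic of degree `k`, the squared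
Vandermonde product equals `∏ (k!)² · det (L_k (q_i))²`. Expanding both determinants over
permutations `σ, τ`, the integral of `∏ q_i ^ β_i` times this against `e^{-∑ q}` over the orthant
factorizes into the one-dimensional integrals `I_{σ i, τ i}^{(β_i)}`. For the weight
`√(q_a q_b)` only the coordinates `a, b` carry `β = 1/2`; every other factor is `δ_{σ i, τ i}` by
orthogonality of the Laguerre polynomials, so only `τ = σ` and `τ = σ ∘ (a b)` survive, leaving
`I_{σa,σa} I_{σb,σb} - I_{σa,σb}²`. Summing over `σ` and over the pairs `(a, b)` gives `μ!` times
the double sum.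
-/

open Finset MeasureTheory

theorem sum_range_neg_one_pow_mul_choose_mul_eq_fwdDiff_iter (f : ℕ → ℤ) (k : ℕ) :
    ∑ a ∈ range (k + 1), (-1) ^ a * (k.choose a : ℤ) * f a = (-1) ^ k * (fwdDiff 1)^[k] f 0 := by
  rw [fwdDiff_iter_eq_sum_shift, mul_sum]
  refine sum_congr rfl fun a ha ↦ ?_
  obtain ⟨c, rfl⟩ := Nat.exists_eq_add_of_le (mem_range_succ_iff.mp ha)
  have hc : ((-1 : ℤ) ^ c) ^ 2 = 1 := by rw [← pow_mul, mul_comm, pow_mul]; simp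
  rw [Nat.add_sub_cancel_left, zero_add, nsmul_one, Nat.cast_id, smul_eq_mul, pow_add]
  linear_combination (-(-1) ^ a * ((a + c).choose a : ℤ) * f a) * hc

theorem sum_range_neg_one_pow_mul_choose_mul_choose (k m : ℕ) :
    ∑ a ∈ range (k + 1), (-1) ^ a * (k.choose a : ℤ) * a.choose m =
      if k = m then (-1) ^ k else 0 := by
  rw [sum_range_neg_one_pow_mul_choose_mul_eq_fwdDiff_iter, fwdDiff_iter_choose_zero]
  split_ifs <;> simp

theorem fwdDiff_iter_choose_eval_self (k m : ℕ) :
    (fwdDiff 1)^[k] (fun x ↦ x.choose m : ℕ → ℤ) m = m.choose k := by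
  rcases le_or_gt k m with hkm | hmk
  · obtain ⟨j, rfl⟩ := Nat.exists_eq_add_of_le hkm
    rw [fwdDiff_iter_choose, Nat.choose_symm_add]
  · obtain ⟨j, rfl⟩ := Nat.exists_eq_add_of_lt hmk
    have hm := fwdDiff_iter_choose 0 m
    rw [add_zero] at hm
    rw [Nat.choose_eq_zero_of_lt hmk, add_assoc, add_comm, Function.iterate_add_apply, hm,
      Function.iterate_succ_apply]
    simp [fwdDiff_const, Function.iterate_fixed]

theorem sum_range_neg_one_pow_mul_choose_mul_add_choose (k m : ℕ) :
    ∑ a ∈ range (k + 1), (-1) ^ a * (k.choose a : ℤ) * (m + a).choose m =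
      (-1) ^ k * m.choose k := by
  have h := fwdDiff_iter_comp_add 1 (fun x ↦ (x.choose m : ℤ)) m k 0
  rw [zero_add] at h
  rw [sum_range_neg_one_pow_mul_choose_mul_eq_fwdDiff_iter (fun a ↦ (m + a).choose m),
    ← fwdDiff_iter_choose_eval_self]
  simp_rw [add_comm m, h]

namespace Equiv.Perm

theorem eq_one_or_eq_swap_of_forall_ne {α : Type*} [DecidableEq α] {a b : α} (hab : a ≠ b)
    {π : Perm α} (h : ∀ i, i ≠ a → i ≠ b → π i = i) : π = 1 ∨ π = swap a b := by
  have hπa : π a = a ∨ π a = b := by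
    by_contra! hne
    exact hne.1 (π.injective (h _ hne.1 hne.2))
  have hπb : π b = a ∨ π b = b := by
    by_contra! hne
    exact hne.2 (π.injective (h _ hne.1 hne.2))
  rcases hπa with ha | ha
  · left
    ext i
    grind [Equiv.apply_eq_iff_eq, Perm.one_apply]
  · right
    ext i
    grind [Equiv.apply_eq_iff_eq, Perm.one_apply]

end Equiv.Perm

section Permutations

open Equiv Equiv.Perm

theorem sum_sign_mul_prod_of_eq_one_of_ne {ι R : Type*} [Fintype ι] [DecidableEq ι] [CommRing R]
    (M : ι → Matrix ι ι R) {a b : ι} (hab : a ≠ b) (hM : ∀ i, i ≠ a → i ≠ b → M i = 1)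
    (σ : Perm ι) :
    ∑ τ : Perm ι, (sign σ : R) * sign τ * ∏ i, M i (σ i) (τ i) =
      M a (σ a) (σ a) * M b (σ b) (σ b) - M a (σ a) (σ b) * M b (σ b) (σ a) := by
  have hsign (π : Perm ι) : (sign σ : R) * sign (σ * π) = sign π := by
    rw [Perm.sign_mul, Units.val_mul, Int.cast_mul, ← mul_assoc, ← Int.cast_mul, ← Units.val_mul,
      Int.units_mul_self, Units.val_one, Int.cast_one, one_mul]
  have hvanish (π : Perm ι) (hπ : π ∉ ({1, swap a b} : Finset (Perm ι))) :
      (sign π : R) * ∏ i, M i (σ i) (σ (π i)) = 0 := by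
    simp only [Finset.mem_insert, Finset.mem_singleton, not_or] at hπ
    obtain ⟨i, hia, hib, hπi⟩ : ∃ i, i ≠ a ∧ i ≠ b ∧ π i ≠ i := by
      by_contra! hfix
      exact (eq_one_or_eq_swap_of_forall_ne hab hfix).elim hπ.1 hπ.2
    have hzero : M i (σ i) (σ (π i)) = 0 := by
      rw [hM i hia hib, Matrix.one_apply_ne (σ.injective.ne hπi.symm)]
    rw [prod_eq_zero (mem_univ i) hzero, mul_zero]
  -- substitute `τ = σ * π`
  refine (Equiv.sum_comp (Equiv.mulLeft σ) _).symm.trans ?_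
  simp only [coe_mulLeft, hsign, Perm.mul_apply]
  rw [← sum_subset (subset_univ _) fun π _ ↦ hvanish π,
    sum_pair (Ne.symm (swap_eq_one_iff.not.mpr hab)), Perm.sign_one, sign_swap hab,
    Fintype.prod_eq_mul a b hab, Fintype.prod_eq_mul a b hab]
  · simp only [Perm.one_apply, swap_apply_left, swap_apply_right]
    push_cast
    ring
  all_goals
    rintro i ⟨hia, hib⟩
    simp [hM i hia hib, swap_apply_of_ne_of_ne hia hib]

theorem sum_filter_ne_sum_perm {ι M : Type*} [Fintype ι] [DecidableEq ι] [AddCommMonoid M]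
    (F : ι → ι → M) (hF : ∀ i, F i i = 0) :
    ∑ p ∈ univ.filter (fun p : ι × ι ↦ p.1 ≠ p.2), ∑ σ : Perm ι, F (σ p.1) (σ p.2) =
      (Fintype.card ι).factorial • ∑ i, ∑ j, F i j := by
  have hdiag (p : ι × ι) (_ : p ∈ univ) (h : ∑ σ : Perm ι, F (σ p.1) (σ p.2) ≠ 0) :
      p.1 ≠ p.2 := fun hp ↦ h (by simp [hp, hF])
  have hperm (σ : Perm ι) : ∑ p : ι × ι, F (σ p.1) (σ p.2) = ∑ p : ι × ι, F p.1 p.2 :=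
    Equiv.sum_comp (σ.prodCongr σ) fun p ↦ F p.1 p.2
  rw [sum_filter_of_ne hdiag, sum_comm, sum_congr rfl fun σ _ ↦ hperm σ, sum_const, card_univ,
    Fintype.card_perm, Fintype.sum_prod_type']

end Permutations

theorem sqrt_mul_eq_prod_rpow {ι : Type*} [Fintype ι] [DecidableEq ι] {a b : ι} (hab : a ≠ b)
    {q : ι → ℝ} (ha : 0 ≤ q a) :
    Real.sqrt (q a * q b) = ∏ i, q i ^ (if i = a ∨ i = b then (1 / 2 : ℝ) else 0) := by
  rw [Fintype.prod_eq_mul a b hab fun i hi ↦ by simp [hi.1, hi.2], if_pos (Or.inl rfl),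
    if_pos (Or.inr rfl), Real.sqrt_mul ha, Real.sqrt_eq_rpow, Real.sqrt_eq_rpow]

section DetSquare

open Equiv Equiv.Perm

variable {ι α : Type*} [Fintype ι] [DecidableEq ι] (w f : ι → α → ℝ)

theorem prod_mul_det_sq_eq_sum_perm (q : ι → α) :
    (∏ i, w i (q i)) * (Matrix.of fun k i ↦ f k (q i)).det ^ 2 =
      ∑ σ : Perm ι, ∑ τ : Perm ι,
        (sign σ : ℝ) * sign τ * ∏ i, w i (q i) * f (σ i) (q i) * f (τ i) (q i) := by
  rw [Matrix.det_apply', sq, sum_mul_sum, mul_sum]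
  refine sum_congr rfl fun σ _ ↦ ?_
  rw [mul_sum]
  refine sum_congr rfl fun τ _ ↦ ?_
  simp only [Matrix.of_apply, prod_mul_distrib]
  ring

variable {w f} [MeasurableSpace α] {ν : Measure α} [SigmaFinite ν]

theorem integrable_pi_prod_mul_det_sq
    (hint : ∀ i j k, Integrable (fun x ↦ w i x * f j x * f k x) ν) :
    Integrable (fun q : ι → α ↦ (∏ i, w i (q i)) * (Matrix.of fun k i ↦ f k (q i)).det ^ 2)
      (Measure.pi fun _ ↦ ν) := by
  simp_rw [prod_mul_det_sq_eq_sum_perm]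
  exact integrable_finsetSum _ fun σ _ ↦ integrable_finsetSum _ fun τ _ ↦
    (Integrable.fintype_prod fun i ↦ hint i (σ i) (τ i)).const_mul _

theorem integral_pi_prod_mul_det_sq
    (hint : ∀ i j k, Integrable (fun x ↦ w i x * f j x * f k x) ν) :
    ∫ q, (∏ i, w i (q i)) * (Matrix.of fun k i ↦ f k (q i)).det ^ 2 ∂Measure.pi (fun _ ↦ ν) =
      ∑ σ : Perm ι, ∑ τ : Perm ι,
        (sign σ : ℝ) * sign τ * ∏ i, ∫ x, w i x * f (σ i) x * f (τ i) x ∂ν := by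
  have hterm (σ τ : Perm ι) : Integrable
      (fun q : ι → α ↦ ∏ i, w i (q i) * f (σ i) (q i) * f (τ i) (q i)) (Measure.pi fun _ ↦ ν) :=
    Integrable.fintype_prod fun i ↦ hint i (σ i) (τ i)
  simp_rw [prod_mul_det_sq_eq_sum_perm]
  rw [integral_finsetSum _ fun σ _ ↦ integrable_finsetSum _ fun τ _ ↦ (hterm σ τ).const_mul _]
  refine sum_congr rfl fun σ _ ↦ ?_
  rw [integral_finsetSum _ fun τ _ ↦ (hterm σ τ).const_mul _]
  refine sum_congr rfl fun τ _ ↦ ?_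
  rw [integral_const_mul,
    integral_fintype_prod_eq_prod (fun i x ↦ w i x * f (σ i) x * f (τ i) x) (μ := fun _ ↦ ν)]

end DetSquare

section Laguerre

open Polynomial

noncomputable def laguerrePoly (n : ℕ) : ℝ[X] :=
  ∑ k ∈ range (n + 1), C ((-1) ^ k * (n.choose k : ℝ) / (k.factorial : ℝ)) * X ^ k

theorem eval_laguerrePoly (n : ℕ) (x : ℝ) : (laguerrePoly n).eval x = laguerre n x := by
  simp only [laguerrePoly, laguerre, eval_finsetSum, eval_mul, eval_C, eval_pow, eval_X]
  exact sum_congr rfl fun k _ ↦ by ring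

theorem coeff_laguerrePoly (n i : ℕ) :
    (laguerrePoly n).coeff i = (-1) ^ i * (n.choose i : ℝ) / i.factorial := by
  simp only [laguerrePoly, finsetSum_coeff, coeff_C_mul_X_pow, sum_ite_eq, Finset.mem_range]
  split_ifs with h
  · rfl
  · rw [Nat.choose_eq_zero_of_lt (by omega)]
    simp

theorem natDegree_laguerrePoly_le (n : ℕ) : (laguerrePoly n).natDegree ≤ n :=
  natDegree_le_iff_coeff_eq_zero.mpr fun i hi ↦ by
    rw [coeff_laguerrePoly, Nat.choose_eq_zero_of_lt (by exact_mod_cast hi)]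
    simp

theorem coeff_C_mul_laguerrePoly_self (n : ℕ) :
    (C ((-1) ^ n * (n.factorial : ℝ)) * laguerrePoly n).coeff n = 1 := by
  rw [coeff_C_mul, coeff_laguerrePoly, Nat.choose_self]
  field_simp
  rw [Nat.cast_one, mul_one, ← pow_mul, mul_comm, pow_mul]
  simp

theorem monic_C_mul_laguerrePoly (n : ℕ) :
    (C ((-1) ^ n * (n.factorial : ℝ)) * laguerrePoly n).Monic :=
  monic_of_natDegree_le_of_coeff_eq_one n
    ((natDegree_C_mul_le _ _).trans (natDegree_laguerrePoly_le n)) (coeff_C_mul_laguerrePoly_self n)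

theorem natDegree_C_mul_laguerrePoly (n : ℕ) :
    (C ((-1) ^ n * (n.factorial : ℝ)) * laguerrePoly n).natDegree = n :=
  natDegree_eq_of_le_of_coeff_ne_zero
    ((natDegree_C_mul_le _ _).trans (natDegree_laguerrePoly_le n))
    (by rw [coeff_C_mul_laguerrePoly_self]; exact one_ne_zero)

theorem prod_sq_sub_eq_det_laguerre_sq {μ : ℕ} (q : Fin μ → ℝ) :
    ∏ i, ∏ j ∈ Ioi i, (q i - q j) ^ 2 =
      (∏ j : Fin μ, ((j : ℕ).factorial : ℝ) ^ 2) *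
        (Matrix.of fun k i : Fin μ ↦ laguerre k (q i)).det ^ 2 := by
  have hdet : (Matrix.vandermonde q).det =
      (∏ j : Fin μ, (-1) ^ (j : ℕ) * ((j : ℕ).factorial : ℝ)) *
        (Matrix.of fun k i : Fin μ ↦ laguerre k (q i)).det := by
    rw [Matrix.det_eval_matrixOfPolynomials_eq_det_vandermonde q _
      (fun j ↦ natDegree_C_mul_laguerrePoly j) (fun j ↦ monic_C_mul_laguerrePoly j),
      ← Matrix.det_transpose (Matrix.of fun k i : Fin μ ↦ laguerre k (q i)), ← Matrix.det_mul_row]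
    congr 1
    ext i j
    simp [eval_laguerrePoly]
  calc ∏ i, ∏ j ∈ Ioi i, (q i - q j) ^ 2 = (Matrix.vandermonde q).det ^ 2 := by
        rw [Matrix.det_vandermonde, ← Finset.prod_pow]
        refine prod_congr rfl fun i _ ↦ ?_
        rw [← Finset.prod_pow]
        exact prod_congr rfl fun j _ ↦ by ring
    _ = _ := by
        rw [hdet, mul_pow, ← Finset.prod_pow]
        congr 1
        refine prod_congr rfl fun j _ ↦ ?_
        rw [mul_pow, ← pow_mul, mul_comm (j : ℕ), pow_mul, neg_one_sq, one_pow, one_mul]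

theorem integrableOn_exp_neg_mul_rpow_mul_pow {β : ℝ} (hβ : -1 < β) (n : ℕ) :
    IntegrableOn (fun x ↦ Real.exp (-x) * x ^ β * x ^ n) (Set.Ioi 0) := by
  have hs : 0 < β + n + 1 := by linarith [(n.cast_nonneg : (0 : ℝ) ≤ n)]
  refine (Real.GammaIntegral_convergent hs).congr_fun (fun x (hx : 0 < x) ↦ ?_) measurableSet_Ioi
  beta_reduce
  rw [add_sub_cancel_right, Real.rpow_add hx, Real.rpow_natCast, mul_assoc]

theorem integrableOn_exp_neg_mul_rpow_mul_eval {β : ℝ} (hβ : -1 < β) (p : ℝ[X]) :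
    IntegrableOn (fun x ↦ Real.exp (-x) * x ^ β * p.eval x) (Set.Ioi 0) := by
  simp_rw [eval_eq_sum_range, mul_sum]
  exact integrable_finsetSum _ fun i _ ↦ IntegrableOn.congr_fun
    ((integrableOn_exp_neg_mul_rpow_mul_pow hβ i).const_mul (p.coeff i))
    (fun x _ ↦ by ring) measurableSet_Ioi

theorem integrableOn_exp_neg_mul_pow (n : ℕ) :
    IntegrableOn (fun x ↦ Real.exp (-x) * x ^ n) (Set.Ioi 0) := by
  simpa using integrableOn_exp_neg_mul_rpow_mul_pow (β := 0) (by norm_num) n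

theorem integrableOn_exp_neg_mul_rpow_mul_laguerre_mul_laguerre {β : ℝ} (hβ : -1 < β)
    (k l : ℕ) :
    IntegrableOn (fun x ↦ Real.exp (-x) * x ^ β * laguerre k x * laguerre l x) (Set.Ioi 0) := by
  simpa [eval_laguerrePoly, mul_assoc] using
    integrableOn_exp_neg_mul_rpow_mul_eval hβ (laguerrePoly k * laguerrePoly l)

theorem integrableOn_exp_neg_mul_pow_mul_laguerre (m k : ℕ) :
    IntegrableOn (fun x ↦ Real.exp (-x) * x ^ m * laguerre k x) (Set.Ioi 0) := by
  refine (integrableOn_exp_neg_mul_rpow_mul_eval (β := 0) (by norm_num)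
    (X ^ m * laguerrePoly k)).congr_fun (fun x _ ↦ ?_) measurableSet_Ioi
  simp only [Real.rpow_zero, eval_mul, eval_pow, eval_X, eval_laguerrePoly]
  ring

theorem integral_exp_neg_mul_pow (n : ℕ) :
    ∫ x in Set.Ioi (0 : ℝ), Real.exp (-x) * x ^ n = n.factorial := by
  rw [← Real.Gamma_nat_eq_factorial, Real.Gamma_eq_integral (by positivity)]
  refine setIntegral_congr_fun measurableSet_Ioi fun x _ ↦ ?_
  rw [add_sub_cancel_right, Real.rpow_natCast]

theorem integral_exp_neg_mul_pow_mul_laguerre (m k : ℕ) :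
    ∫ x in Set.Ioi (0 : ℝ), Real.exp (-x) * x ^ m * laguerre k x =
      (-1) ^ k * m.choose k * m.factorial := by
  have hsum := congrArg (Int.cast : ℤ → ℝ) (sum_range_neg_one_pow_mul_choose_mul_add_choose k m)
  push_cast at hsum
  calc ∫ x in Set.Ioi (0 : ℝ), Real.exp (-x) * x ^ m * laguerre k x
      = ∫ x in Set.Ioi (0 : ℝ), ∑ a ∈ range (k + 1),
          (-1) ^ a * (k.choose a : ℝ) / a.factorial * (Real.exp (-x) * x ^ (m + a)) := by
        refine setIntegral_congr_fun measurableSet_Ioi fun x _ ↦ ?_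
        simp only [laguerre, mul_sum, pow_add]
        exact sum_congr rfl fun a _ ↦ by ring
    _ = ∑ a ∈ range (k + 1), (-1) ^ a * (k.choose a : ℝ) * (m + a).choose m * m.factorial := by
        rw [integral_finsetSum _ fun a _ ↦ (integrableOn_exp_neg_mul_pow (m + a)).const_mul _]
        refine sum_congr rfl fun a _ ↦ ?_
        rw [integral_const_mul, integral_exp_neg_mul_pow,
          ← Nat.add_choose_mul_factorial_mul_factorial, Nat.choose_symm_add]
        push_cast
        field_simp
    _ = (-1) ^ k * m.choose k * m.factorial := by rw [← sum_mul, hsum]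

theorem Ikl_zero (k l : ℕ) : Ikl k l 0 = if k = l then 1 else 0 := by
  have hsum := congrArg (Int.cast : ℤ → ℝ) (sum_range_neg_one_pow_mul_choose_mul_choose l k)
  push_cast at hsum
  calc Ikl k l 0
      = ∫ x in Set.Ioi (0 : ℝ), ∑ b ∈ range (l + 1),
          (-1) ^ b * (l.choose b : ℝ) / b.factorial * (Real.exp (-x) * x ^ b * laguerre k x) := by
        refine setIntegral_congr_fun measurableSet_Ioi fun x _ ↦ ?_
        rw [Real.rpow_zero, mul_one, laguerre.eq_1 l, mul_sum]
        exact sum_congr rfl fun b _ ↦ by ring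
    _ = (-1) ^ k * ∑ b ∈ range (l + 1), (-1) ^ b * (l.choose b : ℝ) * b.choose k := by
        rw [integral_finsetSum _ fun b _ ↦
          (integrableOn_exp_neg_mul_pow_mul_laguerre b k).const_mul _, mul_sum]
        refine sum_congr rfl fun b _ ↦ ?_
        rw [integral_const_mul, integral_exp_neg_mul_pow_mul_laguerre]
        field_simp
    _ = if k = l then 1 else 0 := by
        rw [hsum]
        by_cases h : k = l
        · subst h
          simp [← mul_pow]
        · simp [h, Ne.symm h]

theorem Ikl_comm (k l : ℕ) (β : ℝ) : Ikl k l β = Ikl l k β := by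
  simp only [Ikl, mul_right_comm _ (laguerre k _)]

end Laguerre

section Orthant

open Equiv Equiv.Perm

variable {μ : ℕ}

theorem orthant_eq_pi : {q : Fin μ → ℝ | ∀ i, 0 < q i} = Set.univ.pi fun _ ↦ Set.Ioi 0 := by
  ext q
  simp

theorem measurableSet_orthant : MeasurableSet {q : Fin μ → ℝ | ∀ i, 0 < q i} :=
  orthant_eq_pi ▸ MeasurableSet.univ_pi fun _ ↦ measurableSet_Ioi

theorem volume_restrict_orthant :
    (volume : Measure (Fin μ → ℝ)).restrict {q | ∀ i, 0 < q i} =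
      Measure.pi fun _ ↦ volume.restrict (Set.Ioi 0) := by
  rw [orthant_eq_pi, volume_pi, Measure.restrict_pi_pi]

theorem prod_rpow_mul_vandermonde_sq_mul_exp (β : Fin μ → ℝ) (q : Fin μ → ℝ) :
    (∏ i, q i ^ β i) * (∏ i, ∏ j ∈ Ioi i, (q i - q j) ^ 2) * Real.exp (-∑ m, q m) =
      (∏ j : Fin μ, ((j : ℕ).factorial : ℝ) ^ 2) *
        ((∏ i, Real.exp (-q i) * q i ^ β i) *
          (Matrix.of fun k i : Fin μ ↦ laguerre k (q i)).det ^ 2) := by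
  rw [prod_sq_sub_eq_det_laguerre_sq, ← sum_neg_distrib, Real.exp_sum, prod_mul_distrib]
  ring

theorem integrableOn_orthant_prod_rpow_mul_vandermonde_sq_mul_exp {β : Fin μ → ℝ}
    (hβ : ∀ i, -1 < β i) :
    IntegrableOn
      (fun q ↦ (∏ i, q i ^ β i) * (∏ i, ∏ j ∈ Ioi i, (q i - q j) ^ 2) * Real.exp (-∑ m, q m))
      {q : Fin μ → ℝ | ∀ i, 0 < q i} := by
  simp_rw [IntegrableOn, volume_restrict_orthant, prod_rpow_mul_vandermonde_sq_mul_exp]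
  exact (integrable_pi_prod_mul_det_sq fun i k l ↦
    integrableOn_exp_neg_mul_rpow_mul_laguerre_mul_laguerre (hβ i) k l).const_mul _

theorem integral_orthant_prod_rpow_mul_vandermonde_sq_mul_exp {β : Fin μ → ℝ}
    (hβ : ∀ i, -1 < β i) :
    ∫ q in {q : Fin μ → ℝ | ∀ i, 0 < q i},
        (∏ i, q i ^ β i) * (∏ i, ∏ j ∈ Ioi i, (q i - q j) ^ 2) * Real.exp (-∑ m, q m) =
      (∏ j : Fin μ, ((j : ℕ).factorial : ℝ) ^ 2) *
        ∑ σ : Perm (Fin μ), ∑ τ : Perm (Fin μ),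
          (sign σ : ℝ) * sign τ * ∏ i, Ikl (σ i) (τ i) (β i) := by
  simp_rw [volume_restrict_orthant, prod_rpow_mul_vandermonde_sq_mul_exp]
  rw [integral_const_mul, integral_pi_prod_mul_det_sq fun i k l ↦
    integrableOn_exp_neg_mul_rpow_mul_laguerre_mul_laguerre (hβ i) k l]
  rfl

theorem integrableOn_orthant_sqrt_mul_vandermonde_sq_mul_exp {a b : Fin μ} (hab : a ≠ b) :
    IntegrableOn
      (fun q ↦ Real.sqrt (q a * q b) * (∏ i, ∏ j ∈ Ioi i, (q i - q j) ^ 2) * Real.exp (-∑ m, q m))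
      {q : Fin μ → ℝ | ∀ i, 0 < q i} := by
  refine (integrableOn_orthant_prod_rpow_mul_vandermonde_sq_mul_exp fun i ↦ ?_).congr_fun
    (fun q hq ↦ by rw [sqrt_mul_eq_prod_rpow hab (hq a).le]) measurableSet_orthant
  split_ifs <;> norm_num

theorem integral_orthant_sqrt_mul_vandermonde_sq_mul_exp {a b : Fin μ} (hab : a ≠ b) :
    ∫ q in {q : Fin μ → ℝ | ∀ i, 0 < q i},
        Real.sqrt (q a * q b) * (∏ i, ∏ j ∈ Ioi i, (q i - q j) ^ 2) * Real.exp (-∑ m, q m) =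
      (∏ j : Fin μ, ((j : ℕ).factorial : ℝ) ^ 2) *
        ∑ σ : Perm (Fin μ),
          (Ikl (σ a) (σ a) (1 / 2) * Ikl (σ b) (σ b) (1 / 2) - Ikl (σ a) (σ b) (1 / 2) ^ 2) := by
  set β : Fin μ → ℝ := fun i ↦ if i = a ∨ i = b then 1 / 2 else 0
  have hβ (i : Fin μ) : -1 < β i := by
    simp only [β]
    split_ifs <;> norm_num
  have hM (i : Fin μ) (hia : i ≠ a) (hib : i ≠ b) :
      (Matrix.of fun k l : Fin μ ↦ Ikl k l (β i)) = 1 := by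
    ext k l
    simp [β, hia, hib, Ikl_zero, Matrix.one_apply, Fin.val_inj]
  rw [setIntegral_congr_fun measurableSet_orthant
      (fun q hq ↦ by rw [sqrt_mul_eq_prod_rpow hab (hq a).le]),
    integral_orthant_prod_rpow_mul_vandermonde_sq_mul_exp hβ]
  congr 1
  refine sum_congr rfl fun σ _ ↦
    (sum_sign_mul_prod_of_eq_one_of_ne (fun i ↦ Matrix.of fun k l : Fin μ ↦ Ikl k l (β i))
      hab hM σ).trans ?_
  simp [β, hab, Ne.symm hab, Ikl_comm (σ b), sq]

end Orthant

theorem orthant_integral_sqrt_pairs_general (μ : ℕ) :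
    ∫ q in {q : Fin μ → ℝ | ∀ i, 0 < q i},
        (∑ ij ∈ Finset.univ.filter (fun ij : Fin μ × Fin μ => ij.1 ≠ ij.2),
            Real.sqrt (q ij.1 * q ij.2)) *
          (∏ i, ∏ j ∈ Finset.Ioi i, (q i - q j) ^ 2) * Real.exp (-∑ m, q m)
      = Qbar μ *
        ∑ k ∈ Finset.range μ, ∑ l ∈ Finset.range μ,
          (Ikl k k (1/2) * Ikl l l (1/2) - (Ikl k l (1/2)) ^ 2) := by
  set F : ℕ → ℕ → ℝ := fun k l ↦ Ikl k k (1 / 2) * Ikl l l (1 / 2) - Ikl k l (1 / 2) ^ 2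
  have hdiag (k : Fin μ) : F k k = 0 := by simp only [F, sq, sub_self]
  have hsum : ∑ k : Fin μ, ∑ l : Fin μ, F k l = ∑ k ∈ range μ, ∑ l ∈ range μ, F k l := by
    simp only [Fin.sum_univ_eq_sum_range (F _),
      Fin.sum_univ_eq_sum_range (fun k ↦ ∑ l ∈ range μ, F k l)]
  simp_rw [sum_mul]
  rw [integral_finsetSum _ fun p hp ↦
      integrableOn_orthant_sqrt_mul_vandermonde_sq_mul_exp (mem_filter.mp hp).2,
    sum_congr rfl fun p hp ↦ integral_orthant_sqrt_mul_vandermonde_sq_mul_exp (mem_filter.mp hp).2,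
    ← mul_sum, sum_filter_ne_sum_perm (fun k l : Fin μ ↦ F k l) hdiag, hsum, Fintype.card_fin,
    nsmul_eq_mul, Qbar, Fin.prod_univ_eq_prod_range (fun j ↦ (j.factorial : ℝ) ^ 2)]
  ring

theorem orthant_integral_sqrt_pairs (μ : ℕ) (hμ : 1 ≤ μ) :
    ∫ q in {q : Fin μ → ℝ | ∀ i, 0 < q i},
        (∑ ij ∈ Finset.univ.filter (fun ij : Fin μ × Fin μ => ij.1 ≠ ij.2),
            Real.sqrt (q ij.1 * q ij.2)) *
          (∏ i, ∏ j ∈ Finset.Ioi i, (q i - q j) ^ 2) * Real.exp (-∑ m, q m)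
      = Qbar μ *
        ∑ k ∈ Finset.range μ, ∑ l ∈ Finset.range μ,
          (Ikl k k (1/2) * Ikl l l (1/2) - (Ikl k l (1/2)) ^ 2) :=
  orthant_integral_sqrt_pairs_general μ
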